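/- (Existence of stabilizing switching period under unstable drifts, Theorem 1) Let k_s, k_u ≥ 1, λ_s > λ_u > 0, let 0 < λ̄ < (λ_s - λ_u)/2, and let T ≥ max{ log(2k_u k_s)/(λ_s - λ_u - 2λ̄), log(2k_s²)/(2(λ_s - λ̄)) }. Let x : [0,∞) → ℝ³ be differentiable and suppose that for every n ∈ ℕ: for all t ∈ [2nT, (2n+1)T], ‖(x₁₂(t), ẋ₁₂(t))‖₂ ≤ k_s e^{-λ_s(t - 2nT)} ‖(x₁₂(2nT), ẋ₁₂(2nT))‖₂ and ‖(x₃(t), ẋ₃(t))‖₂ ≤ k_u e^{λ_u(t - 2nT)} ‖(x₃(2nT), ẋ₃(2nT))‖₂; and for all t ∈ [(2n+1)T, (2n+2)T], ‖(x₁₃(t), ẋ₁₃(t))‖₂ ≤ k_s e^{-λ_s(t - (2n+1)T)} ‖(x₁₃((2n+1)T), ẋ₁₃((2n+1)T))‖₂ and ‖(x₂(t), ẋ₂(t))‖₂ ≤ k_u e^{λ_u(t - (2n+1)T)} ‖(x₂((2n+1)T), ẋ₂((2n+1)T))‖₂. Then for all t ≥ 0, ‖(x(t), ẋ(t))‖₂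 ≤ e^{2λ̄T}·max{k_s, k_u e^{λ_u T}}² · e^{-λ̄t} ‖(x(0), ẋ(0))‖₂; in particular the switched dynamics are exponentially stable with decay rate at least λ̄. -/
import Mathlib


/-- Euclidean norm of the stacked position/velocity vector of two coordinates
`(x_i, x_j, ẋ_i, ẋ_j)` of a trajectory `x : ℝ → ℝ³`. -/
noncomputable def pairNorm (x : ℝ → Fin 3 → ℝ) (i j : Fin 3) (t : ℝ) : ℝ :=
  Real.sqrt ((x t i) ^ 2 + (x t j) ^ 2 + (deriv x t i) ^ 2 + (deriv x t j) ^ 2)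

/-- Euclidean norm of the stacked position/velocity vector of one coordinate
`(x_i, ẋ_i)` of a trajectory `x : ℝ → ℝ³`. -/
noncomputable def singleNorm (x : ℝ → Fin 3 → ℝ) (i : Fin 3) (t : ℝ) : ℝ :=
  Real.sqrt ((x t i) ^ 2 + (deriv x t i) ^ 2)

/-- Euclidean norm of the full stacked vector `(x(t), ẋ(t)) ∈ ℝ⁶`. -/
noncomputable def fullNorm (x : ℝ → Fin 3 → ℝ) (t : ℝ) : ℝ :=
  Real.sqrt ((x t 0) ^ 2 + (x t 1) ^ 2 + (x t 2) ^ 2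
    + (deriv x t 0) ^ 2 + (deriv x t 1) ^ 2 + (deriv x t 2) ^ 2)

lemma pairNorm_nonneg (x : ℝ → Fin 3 → ℝ) (i j : Fin 3) (t : ℝ) : 0 ≤ pairNorm x i j t :=
  Real.sqrt_nonneg _

lemma singleNorm_nonneg (x : ℝ → Fin 3 → ℝ) (i : Fin 3) (t : ℝ) : 0 ≤ singleNorm x i t :=
  Real.sqrt_nonneg _

lemma fullNorm_nonneg (x : ℝ → Fin 3 → ℝ) (t : ℝ) : 0 ≤ fullNorm x t :=
  Real.sqrt_nonneg _

lemma full01 (x : ℝ → Fin 3 → ℝ) (t : ℝ) :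
    (fullNorm x t) ^ 2 = (pairNorm x 0 1 t) ^ 2 + (singleNorm x 2 t) ^ 2 := by
  unfold fullNorm pairNorm singleNorm
  rw [Real.sq_sqrt (by positivity), Real.sq_sqrt (by positivity),
    Real.sq_sqrt (by positivity)]
  ring

lemma full02 (x : ℝ → Fin 3 → ℝ) (t : ℝ) :
    (fullNorm x t) ^ 2 = (pairNorm x 0 2 t) ^ 2 + (singleNorm x 1 t) ^ 2 := by
  unfold fullNorm pairNorm singleNorm
  rw [Real.sq_sqrt (by positivity), Real.sq_sqrt (by positivity),
    Real.sq_sqrt (by positivity)]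
  ring

lemma s1le (x : ℝ → Fin 3 → ℝ) (t : ℝ) : singleNorm x 1 t ≤ pairNorm x 0 1 t := by
  unfold singleNorm pairNorm
  apply Real.sqrt_le_sqrt
  nlinarith [sq_nonneg (x t 0), sq_nonneg (deriv x t 0)]

lemma p02le (x : ℝ → Fin 3 → ℝ) (t : ℝ) :
    (pairNorm x 0 2 t) ^ 2 ≤ (pairNorm x 0 1 t) ^ 2 + (singleNorm x 2 t) ^ 2 := by
  unfold pairNorm singleNorm
  rw [Real.sq_sqrt (by positivity), Real.sq_sqrt (by positivity),
    Real.sq_sqrt (by positivity)]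
  nlinarith [sq_nonneg (x t 1), sq_nonneg (deriv x t 1)]

lemma sqle {u v : ℝ} (hv : 0 ≤ v) (h : u ^ 2 ≤ v ^ 2) : u ≤ v := by
  nlinarith [sq_nonneg (u - v), sq_nonneg (u + v)]

set_option maxHeartbeats 1000000 in
/-- **Existence of stabilizing switching period under unstable drifts (Theorem 1).**
Alternating every `T` seconds between a regime stabilizing `(x₁,x₂)` (while `x₃` drifts)
and a regime stabilizing `(x₁,x₃)` (while `x₂` drifts), with
`T ≥ max{log(2kᵤkₛ)/(λₛ-λᵤ-2λ̄), log(2kₛ²)/(2(λₛ-λ̄))}`, yields exponential decay of the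
full state with rate at least `λ̄` and transient constant `e^{2λ̄T} max{kₛ, kᵤe^{λᵤT}}²`. -/
theorem stmt17 (ks ku ls lu lb T : ℝ)
    (hks : 1 ≤ ks) (hku : 1 ≤ ku) (hlu : 0 < lu) (hls : lu < ls)
    (hlb0 : 0 < lb) (hlb : lb < (ls - lu) / 2)
    (hT : T ≥ max (Real.log (2 * ku * ks) / (ls - lu - 2 * lb))
      (Real.log (2 * ks ^ 2) / (2 * (ls - lb))))
    (x : ℝ → Fin 3 → ℝ) (hx : Differentiable ℝ x)
    (heven : ∀ n : ℕ, ∀ t ∈ Set.Icc ((2 * (n : ℝ)) * T) ((2 * (n : ℝ) + 1) * T),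
      pairNorm x 0 1 t
          ≤ ks * Real.exp (-(ls * (t - (2 * (n : ℝ)) * T))) * pairNorm x 0 1 ((2 * (n : ℝ)) * T) ∧
      singleNorm x 2 t
          ≤ ku * Real.exp (lu * (t - (2 * (n : ℝ)) * T)) * singleNorm x 2 ((2 * (n : ℝ)) * T))
    (hodd : ∀ n : ℕ, ∀ t ∈ Set.Icc ((2 * (n : ℝ) + 1) * T) ((2 * (n : ℝ) + 2) * T),
      pairNorm x 0 2 t
          ≤ ks * Real.exp (-(ls * (t - (2 * (n : ℝ) + 1) * T)))
            * pairNorm x 0 2 ((2 * (n : ℝ) + 1) * T) ∧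
      singleNorm x 1 t
          ≤ ku * Real.exp (lu * (t - (2 * (n : ℝ) + 1) * T))
            * singleNorm x 1 ((2 * (n : ℝ) + 1) * T)) :
    ∀ t ≥ (0 : ℝ),
      fullNorm x t ≤ Real.exp (2 * lb * T) * (max ks (ku * Real.exp (lu * T))) ^ 2
        * Real.exp (-(lb * t)) * fullNorm x 0 := by
  have hks0 : (0:ℝ) < ks := lt_of_lt_of_le one_pos hks
  have hku0 : (0:ℝ) < ku := lt_of_lt_of_le one_pos hku
  have hd1 : 0 < ls - lu - 2 * lb := by linarith
  have hd2 : 0 < 2 * (ls - lb) := by linarith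
  have hlog1 : 0 < Real.log (2 * ku * ks) := Real.log_pos (by nlinarith)
  have hT0 : 0 < T :=
    lt_of_lt_of_le (div_pos hlog1 hd1) (le_trans (le_max_left _ _) hT)
  -- abbreviations
  set a := ks * Real.exp (-(ls * T)) with ha
  set b := ku * Real.exp (lu * T) with hb
  set q := Real.exp (-(lb * T)) with hq
  set R := Real.exp (lb * T) with hR
  set M := max ks b with hM
  have hq0 : 0 < q := Real.exp_pos _
  have hq1 : q ≤ 1 := Real.exp_le_one_iff.mpr (by nlinarith [mul_pos hlb0 hT0])
  have hR1 : 1 ≤ R := Real.one_le_exp (by positivity)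
  have hRq : R * q = 1 := by
    rw [hR, hq, ← Real.exp_add]; rw [show lb * T + -(lb * T) = 0 by ring, Real.exp_zero]
  have ha0 : 0 < a := by rw [ha]; positivity
  have hb1 : 1 ≤ b := by
    rw [hb]
    have h := Real.one_le_exp (le_of_lt (mul_pos hlu hT0))
    exact le_trans hku (le_mul_of_one_le_right hku0.le h)
  have hb0 : 0 < b := lt_of_lt_of_le one_pos hb1
  have hMks : ks ≤ M := le_max_left _ _
  have hMb : b ≤ M := le_max_right _ _
  have hM1 : 1 ≤ M := le_trans hks hMks
  have hM0 : 0 ≤ M := by linarith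
  have hlslb : lb ≤ ls := by linarith
  have hR2 : 1 ≤ R ^ 2 := by nlinarith [hR1]
  have hM2 : 1 ≤ M ^ 2 := by nlinarith [hM1]
  have hMRM : M ≤ R ^ 2 * M ^ 2 := by nlinarith [hR2, hM1, hM0, sq_nonneg M]
  have h7 : 1 ≤ R ^ 2 * M ^ 2 := by nlinarith [hR2, hM2]
  have h4b : M ^ 2 ≤ M ^ 4 := by nlinarith [hM2, sq_nonneg M]
  -- the two quantitative conditions on T
  have hF1 : 2 * (a * b) ≤ q ^ 2 := by
    have h1 : Real.log (2 * ku * ks) ≤ T * (ls - lu - 2 * lb) :=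
      (div_le_iff₀ hd1).mp (le_trans (le_max_left _ _) hT)
    have h2 : 2 * ku * ks ≤ Real.exp (T * (ls - lu - 2 * lb)) := by
      calc 2 * ku * ks = Real.exp (Real.log (2 * ku * ks)) :=
            (Real.exp_log (by positivity)).symm
        _ ≤ _ := Real.exp_le_exp.mpr h1
    calc 2 * (a * b) = (2 * ku * ks) * Real.exp (-(ls * T) + lu * T) := by
          rw [ha, hb, Real.exp_add]; ring
      _ ≤ Real.exp (T * (ls - lu - 2 * lb)) * Real.exp (-(ls * T) + lu * T) :=
          mul_le_mul_of_nonneg_right h2 (Real.exp_pos _).le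
      _ = q ^ 2 := by
          rw [hq, sq, ← Real.exp_add, ← Real.exp_add]; congr 1; ring
  have hF2 : 2 * (a * a) ≤ q ^ 2 := by
    have h1 : Real.log (2 * ks ^ 2) ≤ T * (2 * (ls - lb)) :=
      (div_le_iff₀ hd2).mp (le_trans (le_max_right _ _) hT)
    have h2 : 2 * ks ^ 2 ≤ Real.exp (T * (2 * (ls - lb))) := by
      calc 2 * ks ^ 2 = Real.exp (Real.log (2 * ks ^ 2)) :=
            (Real.exp_log (by positivity)).symm
        _ ≤ _ := Real.exp_le_exp.mpr h1
    calc 2 * (a * a) = (2 * ks ^ 2) * Real.exp (-(ls * T) + -(ls * T)) := by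
          rw [ha, Real.exp_add]; ring
      _ ≤ Real.exp (T * (2 * (ls - lb))) * Real.exp (-(ls * T) + -(ls * T)) :=
          mul_le_mul_of_nonneg_right h2 (Real.exp_pos _).le
      _ = q ^ 2 := by
          rw [hq, sq, ← Real.exp_add, ← Real.exp_add]; congr 1; ring
  have m1 : a ^ 2 * a ^ 2 ≤ q ^ 2 * q ^ 2 / 4 := by
    have h := mul_le_mul hF2 hF2 (by positivity) (sq_nonneg q)
    nlinarith [h]
  have m2 : a ^ 2 * b ^ 2 ≤ q ^ 2 * q ^ 2 / 4 := by
    have h := mul_le_mul hF1 hF1 (by positivity) (sq_nonneg q)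
    nlinarith [h]
  ----------------------------------------------------------------
  -- contraction over one full period
  have key : ∀ n : ℕ, fullNorm x ((2 * (n : ℝ) + 2) * T) ≤
      q ^ 2 * fullNorm x ((2 * (n : ℝ)) * T) := by
    intro n
    have mem1 : (2 * (n : ℝ) + 1) * T ≤ (2 * (n : ℝ) + 2) * T := by linarith [hT0.le]
    obtain ⟨o1, o2⟩ := hodd n ((2 * (n : ℝ) + 2) * T) ⟨mem1, le_refl _⟩
    have harg2 : (2 * (n : ℝ) + 2) * T - (2 * (n : ℝ) + 1) * T = T := by ring
    rw [harg2] at o1 o2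
    rw [← ha] at o1
    rw [← hb] at o2
    have mem2 : (2 * (n : ℝ)) * T ≤ (2 * (n : ℝ) + 1) * T := by linarith [hT0.le]
    obtain ⟨g1, g2⟩ := heven n ((2 * (n : ℝ) + 1) * T) ⟨mem2, le_refl _⟩
    have harg1 : (2 * (n : ℝ) + 1) * T - (2 * (n : ℝ)) * T = T := by ring
    rw [harg1] at g1 g2
    rw [← ha] at g1
    rw [← hb] at g2
    -- raw auxiliary facts (before abbreviating)
    have hs1 : singleNorm x 1 ((2 * (n : ℝ) + 1) * T)
        ≤ a * pairNorm x 0 1 ((2 * (n : ℝ)) * T) := le_trans (s1le x _) g1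
    have hpm := p02le x ((2 * (n : ℝ) + 1) * T)
    have hNe := full02 x ((2 * (n : ℝ) + 2) * T)
    have hNz := full01 x ((2 * (n : ℝ)) * T)
    have ho1 := pow_le_pow_left₀ (pairNorm_nonneg x 0 2 ((2 * (n : ℝ) + 2) * T)) o1 2
    have ho2' : singleNorm x 1 ((2 * (n : ℝ) + 2) * T)
        ≤ b * (a * pairNorm x 0 1 ((2 * (n : ℝ)) * T)) :=
      le_trans o2 (mul_le_mul_of_nonneg_left hs1 hb0.le)
    have ho2 := pow_le_pow_left₀ (singleNorm_nonneg x 1 ((2 * (n : ℝ) + 2) * T)) ho2' 2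
    have hg1 := pow_le_pow_left₀ (pairNorm_nonneg x 0 1 ((2 * (n : ℝ) + 1) * T)) g1 2
    have hg2 := pow_le_pow_left₀ (singleNorm_nonneg x 2 ((2 * (n : ℝ) + 1) * T)) g2 2
    -- abbreviate
    set P := pairNorm x 0 1 ((2 * (n : ℝ)) * T) with hP
    set S := singleNorm x 2 ((2 * (n : ℝ)) * T) with hS
    set Nz := fullNorm x ((2 * (n : ℝ)) * T) with hNz'
    set Ne := fullNorm x ((2 * (n : ℝ) + 2) * T) with hNe'
    set p01m := pairNorm x 0 1 ((2 * (n : ℝ) + 1) * T) with hp01m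
    set s2m := singleNorm x 2 ((2 * (n : ℝ) + 1) * T) with hs2m
    set Wm := pairNorm x 0 2 ((2 * (n : ℝ) + 1) * T) with hWm
    set We := pairNorm x 0 2 ((2 * (n : ℝ) + 2) * T) with hWe
    set Ye := singleNorm x 1 ((2 * (n : ℝ) + 2) * T) with hYe
    have hP0 : 0 ≤ P := pairNorm_nonneg _ _ _ _
    have hS0 : 0 ≤ S := singleNorm_nonneg _ _ _
    have hNz0 : 0 ≤ Nz := fullNorm_nonneg _ _
    have hsq : Ne ^ 2 ≤ (q ^ 2 * Nz) ^ 2 := by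
      rw [hNe]
      rw [show (q ^ 2 * Nz) ^ 2 = q ^ 2 * q ^ 2 * (P ^ 2 + S ^ 2) by
        rw [mul_pow, hNz]; ring]
      have t1 := mul_le_mul_of_nonneg_left hpm (sq_nonneg a)
      have t2 := mul_le_mul_of_nonneg_left hg1 (sq_nonneg a)
      have t3 := mul_le_mul_of_nonneg_left hg2 (sq_nonneg a)
      have t4 := mul_le_mul_of_nonneg_right m1 (sq_nonneg P)
      have t5 := mul_le_mul_of_nonneg_right m2 (sq_nonneg S)
      have t6 := mul_le_mul_of_nonneg_right m2 (sq_nonneg P)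
      have t7 : (0:ℝ) ≤ q ^ 2 * q ^ 2 * P ^ 2 := by positivity
      have t8 : (0:ℝ) ≤ q ^ 2 * q ^ 2 * S ^ 2 := by positivity
      linarith [ho1, ho2, t1, t2, t3, t4, t5, t6, t7, t8]
    exact sqle (mul_nonneg (sq_nonneg q) hNz0) hsq
  ----------------------------------------------------------------
  -- geometric decay along period starts
  have dec : ∀ n : ℕ, fullNorm x ((2 * (n : ℝ)) * T) ≤ q ^ (2 * n) * fullNorm x 0 := by
    intro n
    induction n with
    | zero => simp
    | succ n ih =>
      have hc : (2 * ((n + 1 : ℕ) : ℝ)) * T = (2 * (n : ℝ) + 2) * T := by push_cast; ring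
      rw [hc]
      calc fullNorm x ((2 * (n : ℝ) + 2) * T) ≤ q ^ 2 * fullNorm x ((2 * (n : ℝ)) * T) :=
            key n
        _ ≤ q ^ 2 * (q ^ (2 * n) * fullNorm x 0) :=
            mul_le_mul_of_nonneg_left ih (sq_nonneg q)
        _ = q ^ (2 * (n + 1)) * fullNorm x 0 := by
            rw [show 2 * (n + 1) = 2 * n + 2 by ring, pow_add]; ring
  ----------------------------------------------------------------
  -- even-interval estimate
  have eb : ∀ n : ℕ, ∀ t ∈ Set.Icc ((2 * (n : ℝ)) * T) ((2 * (n : ℝ) + 1) * T),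
      fullNorm x t ≤ R ^ 2 * M ^ 2 * Real.exp (-(lb * (t - (2 * (n : ℝ)) * T)))
        * fullNorm x ((2 * (n : ℝ)) * T) := by
    intro n t ht
    obtain ⟨h1, h2⟩ := heven n t ht
    have hτ0 : 0 ≤ t - (2 * (n : ℝ)) * T := sub_nonneg.mpr ht.1
    have hτT : t - (2 * (n : ℝ)) * T ≤ T := by
      have h := ht.2
      have : (2 * (n : ℝ) + 1) * T = (2 * (n : ℝ)) * T + T := by ring
      linarith
    have hNnfull := full01 x ((2 * (n : ℝ)) * T)
    have hfullt := full01 x t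
    have hh1 := pow_le_pow_left₀ (pairNorm_nonneg x 0 1 t) h1 2
    have hh2 := pow_le_pow_left₀ (singleNorm_nonneg x 2 t) h2 2
    set τ := t - (2 * (n : ℝ)) * T with hτ
    set Es := Real.exp (-(ls * τ)) with hEs'
    set Eu := Real.exp (lu * τ) with hEu'
    set E := Real.exp (-(lb * τ)) with hE'
    have hE0 : 0 < E := Real.exp_pos _
    have hEs0 : 0 < Es := Real.exp_pos _
    have hEu0 : 0 < Eu := Real.exp_pos _
    have hEs : Es ≤ E := Real.exp_le_exp.mpr (by linarith [mul_nonneg (sub_nonneg.mpr hlslb) hτ0])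
    have hEu : Eu ≤ Real.exp (lu * T) := Real.exp_le_exp.mpr (by linarith [mul_le_mul_of_nonneg_left hτT hlu.le])
    have hqE : q ≤ E := Real.exp_le_exp.mpr (by linarith [mul_le_mul_of_nonneg_left hτT hlb0.le])
    have hE1 : E ≤ 1 := Real.exp_le_one_iff.mpr (by linarith [mul_nonneg hlb0.le hτ0])
    set P := pairNorm x 0 1 ((2 * (n : ℝ)) * T) with hP
    set S := singleNorm x 2 ((2 * (n : ℝ)) * T) with hS
    set Nn := fullNorm x ((2 * (n : ℝ)) * T) with hNn'
    set pt := pairNorm x 0 1 t with hpt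
    set st := singleNorm x 2 t with hst
    set Nt := fullNorm x t with hNt
    have hP0 : 0 ≤ P := pairNorm_nonneg _ _ _ _
    have hS0 : 0 ≤ S := singleNorm_nonneg _ _ _
    have hNn0 : 0 ≤ Nn := fullNorm_nonneg _ _
    have c1 : (ks * Es) ^ 2 ≤ (M * E) ^ 2 := by
      have h : ks * Es ≤ M * E := mul_le_mul hMks hEs hEs0.le hM0
      exact pow_le_pow_left₀ (by positivity) h 2
    have c2 : (ku * Eu) ^ 2 ≤ M ^ 2 := by
      have h : ku * Eu ≤ M := by
        calc ku * Eu ≤ ku * Real.exp (lu * T) := mul_le_mul_of_nonneg_left hEu hku0.le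
          _ = b := hb.symm
          _ ≤ M := hMb
      exact pow_le_pow_left₀ (by positivity) h 2
    have c3 : (M * E) ^ 2 ≤ (R ^ 2 * M ^ 2 * E) ^ 2 := by
      have hc : M * E ≤ R ^ 2 * M ^ 2 * E :=
        mul_le_mul_of_nonneg_right hMRM hE0.le
      exact pow_le_pow_left₀ (mul_nonneg hM0 hE0.le) hc 2
    have hERq : 1 ≤ R * E := by
      have h := mul_le_mul_of_nonneg_left hqE (Real.exp_pos (lb * T)).le
      rw [← hR] at h
      rw [hRq] at h
      exact h
    have c4 : M ^ 2 ≤ (R ^ 2 * M ^ 2 * E) ^ 2 := by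
      have h4a : 1 ≤ (R * E) ^ 2 := by
        calc (1:ℝ) = 1 ^ 2 := by norm_num
          _ ≤ (R * E) ^ 2 := pow_le_pow_left₀ zero_le_one hERq 2
      have h4d : 1 ≤ (R * E) ^ 2 * R ^ 2 :=
        le_trans h4a (le_mul_of_one_le_right (by positivity) hR2)
      have h4c := mul_le_mul_of_nonneg_right h4d (by positivity : (0:ℝ) ≤ M ^ 4)
      linarith [h4c, h4b]
    have hsq : Nt ^ 2 ≤ (R ^ 2 * M ^ 2 * E * Nn) ^ 2 := by
      rw [hfullt]
      rw [show (R ^ 2 * M ^ 2 * E * Nn) ^ 2 =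
        (R ^ 2 * M ^ 2 * E) ^ 2 * (P ^ 2 + S ^ 2) by rw [← hNnfull]; ring]
      have t1 := mul_le_mul_of_nonneg_right c1 (sq_nonneg P)
      have t2 := mul_le_mul_of_nonneg_right c2 (sq_nonneg S)
      have t3 := mul_le_mul_of_nonneg_right c3 (sq_nonneg P)
      have t4 := mul_le_mul_of_nonneg_right c4 (sq_nonneg S)
      linarith [hh1, hh2, t1, t2, t3, t4]
    exact sqle (by positivity) hsq
  ----------------------------------------------------------------
  -- odd-interval estimate
  have ob : ∀ n : ℕ, ∀ t ∈ Set.Icc ((2 * (n : ℝ) + 1) * T) ((2 * (n : ℝ) + 2) * T),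
      fullNorm x t ≤ R * M ^ 2 * Real.exp (-(lb * (t - (2 * (n : ℝ) + 1) * T)))
        * fullNorm x ((2 * (n : ℝ)) * T) := by
    intro n t ht
    obtain ⟨h1, h2⟩ := hodd n t ht
    have hτ0 : 0 ≤ t - (2 * (n : ℝ) + 1) * T := sub_nonneg.mpr ht.1
    have hτT : t - (2 * (n : ℝ) + 1) * T ≤ T := by
      have h := ht.2
      have : (2 * (n : ℝ) + 2) * T = (2 * (n : ℝ) + 1) * T + T := by ring
      linarith
    -- data at the mid switching time
    have mem2 : (2 * (n : ℝ)) * T ≤ (2 * (n : ℝ) + 1) * T := by linarith [hT0.le]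
    obtain ⟨g1, g2⟩ := heven n ((2 * (n : ℝ) + 1) * T) ⟨mem2, le_refl _⟩
    have harg1 : (2 * (n : ℝ) + 1) * T - (2 * (n : ℝ)) * T = T := by ring
    rw [harg1] at g1 g2
    rw [← ha] at g1
    rw [← hb] at g2
    have hs1 : singleNorm x 1 ((2 * (n : ℝ) + 1) * T)
        ≤ a * pairNorm x 0 1 ((2 * (n : ℝ)) * T) := le_trans (s1le x _) g1
    have hpm := p02le x ((2 * (n : ℝ) + 1) * T)
    have hNnfull := full01 x ((2 * (n : ℝ)) * T)
    have hfullt := full02 x t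
    have hg1 := pow_le_pow_left₀ (pairNorm_nonneg x 0 1 ((2 * (n : ℝ) + 1) * T)) g1 2
    have hg2 := pow_le_pow_left₀ (singleNorm_nonneg x 2 ((2 * (n : ℝ) + 1) * T)) g2 2
    have hh1 := pow_le_pow_left₀ (pairNorm_nonneg x 0 2 t) h1 2
    set τ := t - (2 * (n : ℝ) + 1) * T with hτ
    set Es := Real.exp (-(ls * τ)) with hEs'
    set Eu := Real.exp (lu * τ) with hEu'
    set E := Real.exp (-(lb * τ)) with hE'
    have hE0 : 0 < E := Real.exp_pos _
    have hEs0 : 0 < Es := Real.exp_pos _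
    have hEu0 : 0 < Eu := Real.exp_pos _
    have hEs : Es ≤ E := Real.exp_le_exp.mpr (by linarith [mul_nonneg (sub_nonneg.mpr hlslb) hτ0])
    have hEu : Eu ≤ Real.exp (lu * T) := Real.exp_le_exp.mpr (by linarith [mul_le_mul_of_nonneg_left hτT hlu.le])
    have hqE : q ≤ E := Real.exp_le_exp.mpr (by linarith [mul_le_mul_of_nonneg_left hτT hlb0.le])
    have hE1 : E ≤ 1 := Real.exp_le_one_iff.mpr (by linarith [mul_nonneg hlb0.le hτ0])
    have hh2' : singleNorm x 1 t
        ≤ ku * Eu * (a * pairNorm x 0 1 ((2 * (n : ℝ)) * T)) :=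
      le_trans h2 (mul_le_mul_of_nonneg_left hs1 (by positivity))
    have hh2 := pow_le_pow_left₀ (singleNorm_nonneg x 1 t) hh2' 2
    set P := pairNorm x 0 1 ((2 * (n : ℝ)) * T) with hP
    set S := singleNorm x 2 ((2 * (n : ℝ)) * T) with hS
    set Nn := fullNorm x ((2 * (n : ℝ)) * T) with hNn'
    set p01m := pairNorm x 0 1 ((2 * (n : ℝ) + 1) * T) with hp01m
    set s2m := singleNorm x 2 ((2 * (n : ℝ) + 1) * T) with hs2m
    set Wm := pairNorm x 0 2 ((2 * (n : ℝ) + 1) * T) with hWm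
    set Wt := pairNorm x 0 2 t with hWt
    set Yt := singleNorm x 1 t with hYt
    set Nt := fullNorm x t with hNt
    have hP0 : 0 ≤ P := pairNorm_nonneg _ _ _ _
    have hS0 : 0 ≤ S := singleNorm_nonneg _ _ _
    have hNn0 : 0 ≤ Nn := fullNorm_nonneg _ _
    -- coefficient bounds
    have cs : (ks * Es) ^ 2 ≤ (M * E) ^ 2 := by
      have h : ks * Es ≤ M * E := mul_le_mul hMks hEs hEs0.le hM0
      exact pow_le_pow_left₀ (by positivity) h 2
    have cu : (ku * Eu) ^ 2 ≤ M ^ 2 := by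
      have h : ku * Eu ≤ M := by
        calc ku * Eu ≤ ku * Real.exp (lu * T) := mul_le_mul_of_nonneg_left hEu hku0.le
          _ = b := hb.symm
          _ ≤ M := hMb
      exact pow_le_pow_left₀ (by positivity) h 2
    have hE2 : E ^ 2 ≤ 1 := by
      calc E ^ 2 ≤ 1 ^ 2 := pow_le_pow_left₀ hE0.le hE1 2
        _ = 1 := by norm_num
    have u5 : q ^ 2 ≤ E ^ 2 := pow_le_pow_left₀ hq0.le hqE 2
    have cP : (ks * Es) ^ 2 * a ^ 2 + (ku * Eu) ^ 2 * a ^ 2 ≤ (R * M ^ 2 * E) ^ 2 := by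
      have u1 : (M * E) ^ 2 ≤ M ^ 2 := by
        linarith [mul_le_mul_of_nonneg_left hE2 (sq_nonneg M)]
      have u2 : (ks * Es) ^ 2 + (ku * Eu) ^ 2 ≤ 2 * M ^ 2 := by linarith [cs, cu, u1]
      have u3 := mul_le_mul_of_nonneg_right u2 (sq_nonneg a)
      have u4 : 2 * M ^ 2 * a ^ 2 ≤ M ^ 2 * q ^ 2 := by
        linarith [mul_le_mul_of_nonneg_left hF2 (sq_nonneg M)]
      have u6 : M ^ 2 * q ^ 2 ≤ M ^ 2 * E ^ 2 := by
        linarith [mul_le_mul_of_nonneg_left u5 (sq_nonneg M)]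
      have u7 : M ^ 2 * E ^ 2 ≤ (R * M ^ 2 * E) ^ 2 := by
        linarith [mul_le_mul_of_nonneg_right h7 (sq_nonneg (M * E))]
      linarith [u3, u4, u6, u7]
    have cS : (ks * Es) ^ 2 * b ^ 2 ≤ (R * M ^ 2 * E) ^ 2 := by
      have hbM : b ^ 2 ≤ M ^ 2 := pow_le_pow_left₀ hb0.le hMb 2
      have v1 : (ks * Es) ^ 2 * b ^ 2 ≤ (M * E) ^ 2 * M ^ 2 :=
        mul_le_mul cs hbM (sq_nonneg b) (sq_nonneg (M * E))
      have v2 : (M * E) ^ 2 * M ^ 2 ≤ (R * M ^ 2 * E) ^ 2 := by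
        linarith [mul_le_mul_of_nonneg_right hR2 (sq_nonneg (M ^ 2 * E))]
      linarith
    have hsq : Nt ^ 2 ≤ (R * M ^ 2 * E * Nn) ^ 2 := by
      rw [hfullt]
      rw [show (R * M ^ 2 * E * Nn) ^ 2 =
        (R * M ^ 2 * E) ^ 2 * (P ^ 2 + S ^ 2) by rw [← hNnfull]; ring]
      have t1 := mul_le_mul_of_nonneg_left hpm (sq_nonneg (ks * Es))
      have t2 := mul_le_mul_of_nonneg_left hg1 (sq_nonneg (ks * Es))
      have t3 := mul_le_mul_of_nonneg_left hg2 (sq_nonneg (ks * Es))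
      have t4 := mul_le_mul_of_nonneg_right cP (sq_nonneg P)
      have t5 := mul_le_mul_of_nonneg_right cS (sq_nonneg S)
      linarith [hh1, hh2, t1, t2, t3, t4, t5]
    exact sqle (by positivity) hsq
  ----------------------------------------------------------------
  -- final assembly
  intro t ht
  set n0 := ⌊t / T⌋₊ with hn0
  have hfl : (n0 : ℝ) * T ≤ t := by
    have h := Nat.floor_le (show 0 ≤ t / T from div_nonneg ht hT0.le)
    calc (n0 : ℝ) * T ≤ (t / T) * T := mul_le_mul_of_nonneg_right h hT0.le
      _ = t := div_mul_cancel₀ t hT0.ne'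
  have hfu : t ≤ ((n0 : ℝ) + 1) * T := by
    have h := (Nat.lt_floor_add_one (t / T)).le
    calc t = (t / T) * T := (div_mul_cancel₀ t hT0.ne').symm
      _ ≤ ((n0 : ℝ) + 1) * T := mul_le_mul_of_nonneg_right h hT0.le
  have hCnn : 0 ≤ Real.exp (2 * lb * T) * M ^ 2 := by positivity
  rcases Nat.even_or_odd n0 with he | hoo
  · obtain ⟨n, hn⟩ := he
    have hcast : (n0 : ℝ) = 2 * (n : ℝ) := by rw [hn]; push_cast; ring
    have ht1 : (2 * (n : ℝ)) * T ≤ t := by rw [← hcast]; exact hfl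
    have ht2 : t ≤ (2 * (n : ℝ) + 1) * T := by
      rw [hcast] at hfu; linarith [hfu]
    have h1 := eb n t ⟨ht1, ht2⟩
    have h2 := dec n
    have h3 : fullNorm x t ≤ R ^ 2 * M ^ 2 * Real.exp (-(lb * (t - (2 * (n : ℝ)) * T)))
        * (q ^ (2 * n) * fullNorm x 0) := by
      refine le_trans h1 (mul_le_mul_of_nonneg_left h2 ?_)
      positivity
    have hqn : q ^ (2 * n) = Real.exp (((2 * n : ℕ) : ℝ) * (-(lb * T))) :=
      (Real.exp_nat_mul _ _).symm
    have hconst : R ^ 2 * M ^ 2 * Real.exp (-(lb * (t - (2 * (n : ℝ)) * T)))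
        * (q ^ (2 * n) * fullNorm x 0)
        = Real.exp (2 * lb * T) * M ^ 2 * Real.exp (-(lb * t)) * fullNorm x 0 := by
      rw [hqn, hR, sq, ← Real.exp_add]
      rw [show Real.exp (lb * T + lb * T) * M ^ 2 *
          Real.exp (-(lb * (t - 2 * (n : ℝ) * T))) *
          (Real.exp (((2 * n : ℕ) : ℝ) * (-(lb * T))) * fullNorm x 0)
        = M ^ 2 * (Real.exp (lb * T + lb * T) *
          Real.exp (-(lb * (t - 2 * (n : ℝ) * T))) *
          Real.exp (((2 * n : ℕ) : ℝ) * (-(lb * T)))) * fullNorm x 0 by ring]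
      rw [← Real.exp_add, ← Real.exp_add]
      rw [show Real.exp (2 * lb * T) * M ^ 2 * Real.exp (-(lb * t)) * fullNorm x 0
        = M ^ 2 * (Real.exp (2 * lb * T) * Real.exp (-(lb * t))) * fullNorm x 0 by ring]
      rw [← Real.exp_add]
      congr 2
      push_cast
      ring
    rw [hM] at hconst
    rw [← hconst]
    exact h3
  · obtain ⟨n, hn⟩ := hoo
    have hcast : (n0 : ℝ) = 2 * (n : ℝ) + 1 := by rw [hn]; push_cast; ring
    have ht1 : (2 * (n : ℝ) + 1) * T ≤ t := by rw [← hcast]; exact hfl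
    have ht2 : t ≤ (2 * (n : ℝ) + 2) * T := by
      rw [hcast] at hfu; linarith [hfu]
    have h1 := ob n t ⟨ht1, ht2⟩
    have h2 := dec n
    have h3 : fullNorm x t ≤ R * M ^ 2 * Real.exp (-(lb * (t - (2 * (n : ℝ) + 1) * T)))
        * (q ^ (2 * n) * fullNorm x 0) := by
      refine le_trans h1 (mul_le_mul_of_nonneg_left h2 ?_)
      have : (0:ℝ) < R := Real.exp_pos _
      positivity
    have hqn : q ^ (2 * n) = Real.exp (((2 * n : ℕ) : ℝ) * (-(lb * T))) :=
      (Real.exp_nat_mul _ _).symm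
    have hconst : R * M ^ 2 * Real.exp (-(lb * (t - (2 * (n : ℝ) + 1) * T)))
        * (q ^ (2 * n) * fullNorm x 0)
        = Real.exp (2 * lb * T) * M ^ 2 * Real.exp (-(lb * t)) * fullNorm x 0 := by
      rw [hqn, hR]
      rw [show Real.exp (lb * T) * M ^ 2 *
          Real.exp (-(lb * (t - (2 * (n : ℝ) + 1) * T))) *
          (Real.exp (((2 * n : ℕ) : ℝ) * (-(lb * T))) * fullNorm x 0)
        = M ^ 2 * (Real.exp (lb * T) *
          Real.exp (-(lb * (t - (2 * (n : ℝ) + 1) * T))) *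
          Real.exp (((2 * n : ℕ) : ℝ) * (-(lb * T)))) * fullNorm x 0 by ring]
      rw [← Real.exp_add, ← Real.exp_add]
      rw [show Real.exp (2 * lb * T) * M ^ 2 * Real.exp (-(lb * t)) * fullNorm x 0
        = M ^ 2 * (Real.exp (2 * lb * T) * Real.exp (-(lb * t))) * fullNorm x 0 by ring]
      rw [← Real.exp_add]
      congr 2
      push_cast
      ring
    rw [hM] at hconst
    rw [← hconst]
    exact h3
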